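/- arXiv:2304.01105 — 2 statements merged into one kernel-verified Lean document; each statement's English description precedes it below -/
import Mathlib

section
/- Let $k$ be an integer and $H_k$ the group on $\mathbb{Z}^3$ with multiplication $(x_1,y_1,z_1)*(x_2,y_2,z_2) = (x_1+x_2, y_1+y_2, z_1+z_2+kx_1y_2)$. Then the abelianization of $H_k$ is isomorphic to $\mathbb{Z}^2 \oplus \mathbb{Z}/k$. In particular, $H_{k_1} \cong H_{k_2}$ implies $|k_1| = |k_2|$. -/
/-- The underlying set of the group `H_k`. -/
def Heis (_ : ℤ) : Type := ℤ × ℤ × ℤ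

/-- The Heisenberg-type group law
`(x₁,y₁,z₁) * (x₂,y₂,z₂) = (x₁+x₂, y₁+y₂, z₁+z₂+k x₁ y₂)` on `ℤ³`. -/
instance Heis.instGroup (k : ℤ) : Group (Heis k) where
  mul a b := (a.1 + b.1, a.2.1 + b.2.1, a.2.2 + b.2.2 + k * a.1 * b.2.1)
  one := ((0, 0, 0) : ℤ × ℤ × ℤ)
  inv a := (-a.1, -a.2.1, -a.2.2 + k * a.1 * a.2.1)
  mul_assoc a b c := by
    change ((((a.1 + b.1) + c.1, (a.2.1 + b.2.1) + c.2.1,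
      (a.2.2 + b.2.2 + k * a.1 * b.2.1) + c.2.2 + k * (a.1 + b.1) * c.2.1)) : ℤ × ℤ × ℤ)
      = (a.1 + (b.1 + c.1), a.2.1 + (b.2.1 + c.2.1),
      a.2.2 + (b.2.2 + c.2.2 + k * b.1 * c.2.1) + k * a.1 * (b.2.1 + c.2.1))
    exact Prod.ext (by ring) (Prod.ext (by ring) (by ring))
  one_mul a := by
    change (((0 : ℤ) + a.1, (0 : ℤ) + a.2.1, (0 : ℤ) + a.2.2 + k * 0 * a.2.1) : ℤ × ℤ × ℤ) = a
    exact Prod.ext (by ring) (Prod.ext (by ring) (by ring))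
  mul_one a := by
    change ((a.1 + 0, a.2.1 + 0, a.2.2 + 0 + k * a.1 * 0) : ℤ × ℤ × ℤ) = a
    exact Prod.ext (by ring) (Prod.ext (by ring) (by ring))
  inv_mul_cancel a := by
    change (((-a.1) + a.1, (-a.2.1) + a.2.1,
      (-a.2.2 + k * a.1 * a.2.1) + a.2.2 + k * (-a.1) * a.2.1) : ℤ × ℤ × ℤ)
      = ((0, 0, 0) : ℤ × ℤ × ℤ)
    exact Prod.ext (by ring) (Prod.ext (by ring) (by ring))

lemma Heis.mul_def (k : ℤ) (a b : Heis k) :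
    a * b = ((a.1 + b.1, a.2.1 + b.2.1, a.2.2 + b.2.2 + k * a.1 * b.2.1) : ℤ × ℤ × ℤ) := rfl

lemma Heis.inv_def (k : ℤ) (a : Heis k) :
    a⁻¹ = ((-a.1, -a.2.1, -a.2.2 + k * a.1 * a.2.1) : ℤ × ℤ × ℤ) := rfl

lemma Heis.one_def (k : ℤ) : (1 : Heis k) = ((0,0,0) : ℤ × ℤ × ℤ) := rfl

lemma Heis.kcast (k : ℤ) : ((k : ℤ) : ZMod k.natAbs) = 0 := by
  rw [ZMod.intCast_zmod_eq_zero_iff_dvd]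
  exact Int.natAbs_dvd.mpr dvd_rfl

def Heis.phi (k : ℤ) : Heis k →* Multiplicative ((ℤ × ℤ) × ZMod k.natAbs) where
  toFun a := Multiplicative.ofAdd ((a.1, a.2.1), (a.2.2 : ZMod k.natAbs))
  map_one' := by
    change Multiplicative.ofAdd ((((0:ℤ), (0:ℤ)), ((0:ℤ) : ZMod k.natAbs))) = 1
    simp
  map_mul' a b := by
    rw [Heis.mul_def]
    show Multiplicative.ofAdd (((a.1 + b.1, a.2.1 + b.2.1),
        ((a.2.2 + b.2.2 + k * a.1 * b.2.1 : ℤ) : ZMod k.natAbs))) = _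
    rw [← ofAdd_add]
    congr 1
    rw [Prod.mk_add_mk, Prod.mk_add_mk]
    refine Prod.ext rfl ?_
    push_cast [Heis.kcast k]
    ring

lemma Heis.phi_surjective (k : ℤ) : Function.Surjective (Heis.phi k) := by
  rintro m
  obtain ⟨⟨x, y⟩, c⟩ := m
  obtain ⟨z, rfl⟩ := ZMod.intCast_surjective c
  exact ⟨((x, y, z) : ℤ × ℤ × ℤ), rfl⟩

open scoped commutatorElement in
lemma Heis.commutator_eq (k : ℤ) (a b : Heis k) :
    ⁅a, b⁆ = ((0, 0, k * (a.1 * b.2.1 - b.1 * a.2.1)) : ℤ × ℤ × ℤ) := by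
  rw [commutatorElement_def, Heis.mul_def, Heis.mul_def, Heis.inv_def, Heis.inv_def,
    Heis.mul_def]
  exact Prod.ext (by ring) (Prod.ext (by ring) (by ring))

open scoped commutatorElement in
lemma Heis.ker_phi (k : ℤ) : commutator (Heis k) = (Heis.phi k).ker := by
  apply le_antisymm (Abelianization.commutator_subset_ker (Heis.phi k))
  intro a ha
  rw [MonoidHom.mem_ker] at ha
  have h1 : a.1 = 0 ∧ a.2.1 = 0 ∧ ((a.2.2 : ZMod k.natAbs) = 0) := by
    have h : (((a.1, a.2.1), (a.2.2 : ZMod k.natAbs)) : (ℤ × ℤ) × ZMod k.natAbs) = 0 :=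
      congrArg Multiplicative.toAdd ha
    exact ⟨congrArg (fun p => p.1.1) h, congrArg (fun p => p.1.2) h, congrArg (fun p => p.2) h⟩
  obtain ⟨hx, hy, hz⟩ := h1
  obtain ⟨t, ht⟩ : k ∣ a.2.2 := by
    have := (ZMod.intCast_zmod_eq_zero_iff_dvd _ _).mp hz
    exact (Int.natAbs_dvd).mp this
  have : a = ⁅(show Heis k from ((1, 0, 0) : ℤ × ℤ × ℤ)), (show Heis k from ((0, t, 0) : ℤ × ℤ × ℤ))⁆ := by
    rw [Heis.commutator_eq]
    refine Prod.ext hx (Prod.ext hy ?_)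
    show a.2.2 = k * (1 * t - 0 * 0)
    rw [ht]; ring
  rw [this, commutator_def]
  exact Subgroup.commutator_mem_commutator (Subgroup.mem_top _) (Subgroup.mem_top _)

noncomputable def Heis.iso (k : ℤ) :
    Abelianization (Heis k) ≃* Multiplicative ((ℤ × ℤ) × ZMod k.natAbs) :=
  (QuotientGroup.quotientMulEquivOfEq (Heis.ker_phi k)).trans
    (QuotientGroup.quotientKerEquivOfSurjective (Heis.phi k) (Heis.phi_surjective k))

lemma Heis.int_fin {x : ℤ} (h : IsOfFinAddOrder x) : x = 0 := by
  obtain ⟨n, hn, h⟩ := isOfFinAddOrder_iff_nsmul_eq_zero.mp h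
  rw [nsmul_eq_mul] at h
  rcases mul_eq_zero.mp h with h | h
  · exact absurd (by exact_mod_cast h) hn.ne'
  · exact h

lemma Heis.fin_iff (n : ℕ) (a : (ℤ × ℤ) × ZMod n) :
    IsOfFinAddOrder a ↔ a.1 = 0 ∧ IsOfFinAddOrder a.2 := by
  constructor
  · intro h
    refine ⟨?_, (AddMonoidHom.snd _ _).isOfFinAddOrder h⟩
    have h1 : IsOfFinAddOrder a.1 := (AddMonoidHom.fst _ _).isOfFinAddOrder h
    exact Prod.ext (Heis.int_fin ((AddMonoidHom.fst _ _).isOfFinAddOrder h1))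
      (Heis.int_fin ((AddMonoidHom.snd _ _).isOfFinAddOrder h1))
  · rintro ⟨h1, h2⟩
    have ha : a = ((0 : ℤ × ℤ), a.2) := Prod.ext h1 rfl
    rw [ha]
    exact (AddMonoidHom.inr (ℤ × ℤ) (ZMod n)).isOfFinAddOrder h2

def Heis.torsEquiv (n : ℕ) :
    {a : (ℤ × ℤ) × ZMod n // IsOfFinAddOrder a} ≃ {c : ZMod n // IsOfFinAddOrder c} where
  toFun a := ⟨a.1.2, ((Heis.fin_iff n a.1).mp a.2).2⟩
  invFun c := ⟨((0 : ℤ × ℤ), c.1), (Heis.fin_iff n _).mpr ⟨rfl, c.2⟩⟩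
  left_inv a := Subtype.ext (Prod.ext ((Heis.fin_iff n a.1).mp a.2).1.symm rfl)
  right_inv _ := rfl

def Heis.torsCongr {A B : Type*} [AddMonoid A] [AddMonoid B] (e : A ≃+ B) :
    {a : A // IsOfFinAddOrder a} ≃ {b : B // IsOfFinAddOrder b} where
  toFun a := ⟨e a.1, e.toAddMonoidHom.isOfFinAddOrder a.2⟩
  invFun b := ⟨e.symm b.1, e.symm.toAddMonoidHom.isOfFinAddOrder b.2⟩
  left_inv a := Subtype.ext (e.symm_apply_apply a.1)
  right_inv b := Subtype.ext (e.apply_symm_apply b.1)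

lemma Heis.tcard (n : ℕ) :
    Nat.card {c : ZMod n // IsOfFinAddOrder c} = if n = 0 then 1 else n := by
  rcases eq_or_ne n 0 with rfl | hn
  · rw [if_pos rfl]
    rw [Nat.card_eq_one_iff_unique]
    constructor
    · constructor
      intro a b
      apply Subtype.ext
      have ha : (a.1 : ℤ) = 0 := Heis.int_fin a.2
      have hb : (b.1 : ℤ) = 0 := Heis.int_fin b.2
      rw [ha, hb]
    · exact ⟨⟨0, IsOfFinAddOrder.zero⟩⟩
  · rw [if_neg hn]
    haveI : NeZero n := ⟨hn⟩
    rw [Nat.card_congr (Equiv.subtypeUnivEquiv fun c => isOfFinAddOrder_of_finite c)]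
    exact Nat.card_zmod n

lemma Heis.key (n₁ n₂ : ℕ) (e : ((ℤ × ℤ) × ZMod n₁) ≃+ ((ℤ × ℤ) × ZMod n₂)) : n₁ = n₂ := by
  have hc : (if n₁ = 0 then 1 else n₁) = (if n₂ = 0 then 1 else n₂) := by
    rw [← Heis.tcard, ← Heis.tcard]
    exact Nat.card_congr ((Heis.torsEquiv n₁).symm.trans
      ((Heis.torsCongr e).trans (Heis.torsEquiv n₂)))
  have rank_contra : ∀ (f : ((ℤ × ℤ) × ℤ) ≃+ ((ℤ × ℤ) × ZMod 1)), False := by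
    intro f
    have g : ((ℤ × ℤ) × ℤ) ≃+ (ℤ × ℤ) :=
      f.trans (AddEquiv.prodUnique)
    have := g.toIntLinearEquiv.finrank_eq
    simp [Module.finrank_self] at this
  rcases eq_or_ne n₁ 0 with rfl | h1 <;> rcases eq_or_ne n₂ 0 with rfl | h2
  · rfl
  · rw [if_pos rfl, if_neg h2] at hc
    subst hc
    exact absurd (rank_contra e) id
  · rw [if_neg h1, if_pos rfl] at hc
    subst hc
    exact absurd (rank_contra e.symm) id
  · rwa [if_neg h1, if_neg h2] at hc

/-- The abelianization of `H_k` is `ℤ² ⊕ ℤ/k`; in particular an isomorphism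
`H_{k₁} ≅ H_{k₂}` forces `|k₁| = |k₂|`. -/
theorem stmt_8 :
    (∀ k : ℤ, Nonempty
      (Abelianization (Heis k) ≃* Multiplicative ((ℤ × ℤ) × ZMod k.natAbs))) ∧
    (∀ k₁ k₂ : ℤ, Nonempty (Heis k₁ ≃* Heis k₂) → k₁.natAbs = k₂.natAbs) := by
  constructor
  · intro k
    exact ⟨Heis.iso k⟩
  · rintro k₁ k₂ ⟨e⟩
    apply Heis.key
    exact MulEquiv.toAdditive
      ((Heis.iso k₁).symm.trans ((e.abelianizationCongr).trans (Heis.iso k₂)))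
end

section
/- Let $p_1,\dots,p_m$ be positive integers and $d_1 \mid d_2 \mid \cdots \mid d_m$ the invariant factors of $\mathrm{diag}(p_1,\dots,p_m)$. Then the cokernel of the map $\mathbb{Z}^m \to \mathbb{Z}^{m+1}$ given by the $(m+1)\times m$ matrix with first row all ones and the remaining $m\times m$ block equal to $\mathrm{diag}(p_1,\dots,p_m)$ is isomorphic to $\mathbb{Z} \oplus \bigoplus_{j=1}^{m-1} \mathbb{Z}/d_j$. -/
open Matrix

/-- The `(m+1) × m` integer matrix with first row all ones and remaining block
`diag (p₁, …, p_m)`; its columns are `e₀ + pᵢ eᵢ`. -/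
def relMatrix (m : ℕ) (p : Fin m → ℕ) : Matrix (Fin (m + 1)) (Fin m) ℤ :=
  Matrix.of (Fin.cons (fun _ => 1) fun i j => if j = i then (p i : ℤ) else 0)


lemma int_dvd_of_natAbs {q : ℕ} {x : ℤ} (h : q ∣ x.natAbs) : (q:ℤ) ∣ x := by
  rwa [← Int.natAbs_dvd_natAbs, Int.natAbs_natCast]

lemma exists_coprime_shift (a b ga n : ℤ) (hn : n ≠ 0) (h1 : a * ga + b = 1) :
    ∃ k : ℤ, IsCoprime (a + k * b) n := by
  classical
  set S : Finset ℕ := n.natAbs.primeFactors.filter (fun q => ¬ ((q:ℤ) ∣ a)) with hS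
  set k : ℤ := (∏ q ∈ S, (q:ℤ)) with hk
  refine ⟨k, ?_⟩
  rw [Int.isCoprime_iff_gcd_eq_one]
  by_contra hg
  obtain ⟨q, hq, hq1, hq2⟩ := Nat.Prime.not_coprime_iff_dvd.mp hg
  have hqz : Prime (q : ℤ) := Nat.prime_iff_prime_int.mp hq
  have hq1' : (q:ℤ) ∣ a + k * b := int_dvd_of_natAbs hq1
  have hq2' : (q:ℤ) ∣ n := int_dvd_of_natAbs hq2
  by_cases hqa : (q:ℤ) ∣ a
  · have hqkb : (q:ℤ) ∣ k * b := (dvd_add_right hqa).mp hq1'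
    have hqb : (q:ℤ) ∣ b := by
      rcases hqz.dvd_mul.mp hqkb with h | h
      · exfalso
        obtain ⟨q', hq'S, hqq'⟩ := (Prime.dvd_finset_prod_iff hqz _).mp h
        have hq'p : Nat.Prime q' := Nat.prime_of_mem_primeFactors (Finset.mem_filter.mp hq'S).1
        have : q = q' := (Nat.prime_dvd_prime_iff_eq hq hq'p).mp (by exact_mod_cast hqq')
        subst this
        exact (Finset.mem_filter.mp hq'S).2 hqa
      · exact h
    have : (q:ℤ) ∣ 1 := h1 ▸ dvd_add (hqa.mul_right ga) hqb
    exact hq.one_lt.ne' (by exact_mod_cast Int.eq_one_of_dvd_one (by positivity) this)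
  · have hqS : q ∈ S := Finset.mem_filter.mpr
      ⟨Nat.mem_primeFactors.mpr ⟨hq, hq2, by simpa using hn⟩, hqa⟩
    have hqk : (q:ℤ) ∣ k := Finset.dvd_prod_of_mem _ hqS
    exact hqa ((dvd_add_left (hqk.mul_right b)).mp (add_comm a (k*b) ▸ hq1'))

open Matrix

variable {n : ℕ}

def Rmat (d : Fin (n+1) → ℕ) (P Q : Matrix (Fin (n+1)) (Fin (n+1)) ℤ) :
    Matrix (Fin (n+1)) (Fin (n+1)) ℤ :=
  Q * Matrix.diagonal (fun j => (d (Fin.last n) : ℤ) / (d j : ℤ)) * P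

lemma diag_p_mul_Rmat (p d : Fin (n+1) → ℕ)
    (hchain : ∀ i j, i ≤ j → d i ∣ d j)
    (P Q : Matrix.GeneralLinearGroup (Fin (n+1)) ℤ)
    (hSNF : (P : Matrix (Fin (n+1)) (Fin (n+1)) ℤ) *
        Matrix.diagonal (fun i => (p i : ℤ)) * Q = Matrix.diagonal (fun i => (d i : ℤ))) :
    Matrix.diagonal (fun i => (p i : ℤ)) * Rmat d P.val Q.val
      = (d (Fin.last n) : ℤ) • (1 : Matrix (Fin (n+1)) (Fin (n+1)) ℤ) := by
  have hdl : ∀ j, (d j : ℤ) ∣ (d (Fin.last n) : ℤ) := fun j =>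
    Int.natCast_dvd_natCast.mpr (hchain j (Fin.last n) (Fin.le_last j))
  have h1 : Matrix.diagonal (fun i => (p i : ℤ)) * Q.val
      = (↑P⁻¹ : Matrix (Fin (n+1)) (Fin (n+1)) ℤ) * Matrix.diagonal (fun i => (d i : ℤ)) := by
    rw [← hSNF]
    simp [← Matrix.mul_assoc]
  have h2 : Matrix.diagonal (fun i => (d i : ℤ)) *
      Matrix.diagonal (fun j => (d (Fin.last n) : ℤ) / (d j : ℤ))
      = (d (Fin.last n) : ℤ) • (1 : Matrix (Fin (n+1)) (Fin (n+1)) ℤ) := by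
    rw [Matrix.diagonal_mul_diagonal, Matrix.smul_one_eq_diagonal]
    have : (fun j => (d j : ℤ) * ((d (Fin.last n) : ℤ) / (d j : ℤ)))
        = fun _ => (d (Fin.last n) : ℤ) := funext fun j => Int.mul_ediv_cancel' (hdl j)
    rw [this]
  calc Matrix.diagonal (fun i => (p i : ℤ)) * Rmat d P.val Q.val
      = (Matrix.diagonal (fun i => (p i : ℤ)) * Q.val) *
        (Matrix.diagonal (fun j => (d (Fin.last n) : ℤ) / (d j : ℤ)) * P.val) := by
        simp [Rmat, Matrix.mul_assoc]
    _ = (↑P⁻¹ : Matrix (Fin (n+1)) (Fin (n+1)) ℤ) *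
        ((Matrix.diagonal (fun i => (d i : ℤ)) *
          Matrix.diagonal (fun j => (d (Fin.last n) : ℤ) / (d j : ℤ))) * P.val) := by
        rw [h1, Matrix.mul_assoc, Matrix.mul_assoc]
    _ = (d (Fin.last n) : ℤ) • ((↑P⁻¹ : Matrix (Fin (n+1)) (Fin (n+1)) ℤ) * P.val) := by
        rw [h2, Matrix.smul_mul, Matrix.mul_smul, Matrix.one_mul]
    _ = (d (Fin.last n) : ℤ) • (1 : Matrix (Fin (n+1)) (Fin (n+1)) ℤ) := by
        rw [Units.inv_mul]
open Matrix

variable {n : ℕ}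

lemma Rmat_entry (p : Fin (n+1) → ℕ) (ℓ : ℤ) (R : Matrix (Fin (n+1)) (Fin (n+1)) ℤ)
    (hDR : Matrix.diagonal (fun i => (p i : ℤ)) * R = ℓ • 1) (i j : Fin (n+1)) :
    (p i : ℤ) * R i j = if i = j then ℓ else 0 := by
  have := congrFun (congrFun hDR i) j
  simpa [Matrix.diagonal_mul, Matrix.smul_apply, Matrix.one_apply, mul_ite] using this
  
lemma Rmat_offdiag (p : Fin (n+1) → ℕ) (hp : ∀ i, 0 < p i) (ℓ : ℤ)
    (R : Matrix (Fin (n+1)) (Fin (n+1)) ℤ)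
    (hDR : Matrix.diagonal (fun i => (p i : ℤ)) * R = ℓ • 1) {i j : Fin (n+1)} (hij : i ≠ j) :
    R i j = 0 := by
  have h := Rmat_entry p ℓ R hDR i j
  rw [if_neg hij] at h
  exact (mul_eq_zero.mp h).resolve_left (by exact_mod_cast (hp i).ne')

lemma Rmat_diag (p : Fin (n+1) → ℕ) (ℓ : ℤ) (R : Matrix (Fin (n+1)) (Fin (n+1)) ℤ)
    (hDR : Matrix.diagonal (fun i => (p i : ℤ)) * R = ℓ • 1) (i : Fin (n+1)) :
    (p i : ℤ) * R i i = ℓ := by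
  simpa using Rmat_entry p ℓ R hDR i i

lemma bezout_sum (p : Fin (n+1) → ℕ) (hp : ∀ i, 0 < p i) (d : Fin (n+1) → ℕ)
    (hdne : (d (Fin.last n) : ℤ) ≠ 0)
    (P Q : Matrix.GeneralLinearGroup (Fin (n+1)) ℤ)
    (hDR : Matrix.diagonal (fun i => (p i : ℤ)) *
      (Q.val * Matrix.diagonal (fun j => (d (Fin.last n) : ℤ) / (d j : ℤ)) * P.val)
      = (d (Fin.last n) : ℤ) • 1) :
    ∑ i, ((↑Q⁻¹ : Matrix (Fin (n+1)) (Fin (n+1)) ℤ) (Fin.last n) i *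
      ((↑P⁻¹ : Matrix (Fin (n+1)) (Fin (n+1)) ℤ) i (Fin.last n))) *
      (Q.val * Matrix.diagonal (fun j => (d (Fin.last n) : ℤ) / (d j : ℤ)) * P.val) i i = 1 := by
  set R := Q.val * Matrix.diagonal (fun j => (d (Fin.last n) : ℤ) / (d j : ℤ)) * P.val with hR
  have key : (↑Q⁻¹ : Matrix (Fin (n+1)) (Fin (n+1)) ℤ) * R * (↑P⁻¹ : Matrix (Fin (n+1)) (Fin (n+1)) ℤ)
      = Matrix.diagonal (fun j => (d (Fin.last n) : ℤ) / (d j : ℤ)) := by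
    rw [hR]
    calc (↑Q⁻¹ : Matrix (Fin (n+1)) (Fin (n+1)) ℤ) *
          (Q.val * Matrix.diagonal (fun j => (d (Fin.last n) : ℤ) / (d j : ℤ)) * P.val) * ↑P⁻¹
        = ((↑Q⁻¹ : Matrix (Fin (n+1)) (Fin (n+1)) ℤ) * Q.val) *
          Matrix.diagonal (fun j => (d (Fin.last n) : ℤ) / (d j : ℤ)) * (P.val * ↑P⁻¹) := by
          simp only [Matrix.mul_assoc]
      _ = Matrix.diagonal (fun j => (d (Fin.last n) : ℤ) / (d j : ℤ)) := by
          rw [Units.inv_mul, Units.mul_inv, Matrix.one_mul, Matrix.mul_one]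
  have hentry := congrFun (congrFun key (Fin.last n)) (Fin.last n)
  rw [Matrix.mul_apply] at hentry
  have hcol : ∀ k, ((↑Q⁻¹ : Matrix (Fin (n+1)) (Fin (n+1)) ℤ) * R) (Fin.last n) k
      = (↑Q⁻¹ : Matrix (Fin (n+1)) (Fin (n+1)) ℤ) (Fin.last n) k * R k k := by
    intro k
    rw [Matrix.mul_apply]
    rw [Finset.sum_eq_single k]
    · intro b _ hb
      rw [Rmat_offdiag p hp _ R hDR hb, mul_zero]
    · simp
  simp only [hcol] at hentry
  rw [Matrix.diagonal_apply_eq, Int.ediv_self hdne] at hentry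
  rw [← hentry]
  congr 1
  funext i
  ring

lemma colsum_eq (p : Fin (n+1) → ℕ) (hp : ∀ i, 0 < p i) (d : Fin (n+1) → ℕ)
    (P Q : Matrix.GeneralLinearGroup (Fin (n+1)) ℤ)
    (hDR : Matrix.diagonal (fun i => (p i : ℤ)) *
      (Q.val * Matrix.diagonal (fun j => (d (Fin.last n) : ℤ) / (d j : ℤ)) * P.val)
      = (d (Fin.last n) : ℤ) • 1) (k : Fin (n+1)) :
    ∑ j, (((d (Fin.last n) : ℤ) / (d j : ℤ)) * ∑ i, Q.val i j) * P.val j k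
      = (Q.val * Matrix.diagonal (fun j => (d (Fin.last n) : ℤ) / (d j : ℤ)) * P.val) k k := by
  set R := Q.val * Matrix.diagonal (fun j => (d (Fin.last n) : ℤ) / (d j : ℤ)) * P.val with hR
  have hRik : ∀ i, R i k = ∑ j, Q.val i j * ((d (Fin.last n) : ℤ) / (d j : ℤ)) * P.val j k := by
    intro i
    rw [hR, Matrix.mul_apply]
    congr 1
    funext j
    rw [Matrix.mul_diagonal]
  have : ∑ i, R i k = R k k := by
    rw [Finset.sum_eq_single k]
    · intro b _ hb
      exact Rmat_offdiag p hp _ R hDR hb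
    · simp
  rw [← this]
  simp only [hRik]
  rw [Finset.sum_comm]
  congr 1
  funext j
  rw [Finset.mul_sum, Finset.sum_mul]
  congr 1
  funext i
  ring

/-- The hom `ZMod dj →+ ZMod ln` sending `1` to `aj`, well-defined when `ln ∣ dj * aj`. -/
def chiHom (dj ln : ℕ) (aj : ℤ) (h : (ln : ℤ) ∣ (dj : ℤ) * aj) : ZMod dj →+ ZMod ln :=
  ZMod.lift dj ⟨(Int.castAddHom (ZMod ln)).comp (AddMonoidHom.mulLeft aj), by
    show ((aj * (dj:ℤ) : ℤ) : ZMod ln) = 0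
    rw [ZMod.intCast_zmod_eq_zero_iff_dvd]
    rwa [mul_comm]⟩

lemma chiHom_intCast (dj ln : ℕ) (aj : ℤ) (h : (ln : ℤ) ∣ (dj : ℤ) * aj) (x : ℤ) :
    chiHom dj ln aj h ((x : ℤ) : ZMod dj) = ((aj * x : ℤ) : ZMod ln) := by
  rw [chiHom, ZMod.lift_coe]
  rfl

lemma chiHom_self_apply (ln : ℕ) (aj : ℤ) (h : (ln : ℤ) ∣ (ln : ℤ) * aj) (x : ZMod ln) :
    chiHom ln ln aj h x = ((aj : ZMod ln)) * x := by
  obtain ⟨z, rfl⟩ := ZMod.intCast_surjective x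
  rw [chiHom_intCast]
  push_cast
  ring
open Matrix


variable {n : ℕ}

lemma relMatrix_mulVec (p : Fin (n+1) → ℕ) (c : Fin (n+1) → ℤ) :
    (relMatrix (n+1) p) *ᵥ c = Fin.cons (∑ k, c k) (fun i => (p i : ℤ) * c i) := by
  funext i
  refine Fin.cases ?_ ?_ i
  · simp [relMatrix, Matrix.mulVec, dotProduct]
  · intro i
    simp [relMatrix, Matrix.mulVec, dotProduct, ite_mul, Finset.sum_ite_eq]

def chiTot (d : Fin (n+1) → ℕ) (ln : ℕ) (a : Fin (n+1) → ℤ)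
    (h : ∀ j, (ln : ℤ) ∣ (d j : ℤ) * a j) : (∀ j, ZMod (d j)) →+ ZMod ln :=
  ∑ j, (chiHom (d j) ln (a j) (h j)).comp (Pi.evalAddMonoidHom (fun j => ZMod (d j)) j)

lemma chiTot_apply (d : Fin (n+1) → ℕ) (ln : ℕ) (a : Fin (n+1) → ℤ)
    (h : ∀ j, (ln : ℤ) ∣ (d j : ℤ) * a j) (u : ∀ j, ZMod (d j)) :
    chiTot d ln a h u = ∑ j, chiHom (d j) ln (a j) (h j) (u j) := by
  simp [chiTot, AddMonoidHom.finset_sum_apply]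

def ThetaHom (d : Fin (n+1) → ℕ) (ℓ : ℤ) (r : Fin (n+1) → ℤ)
    (Pm : Matrix (Fin (n+1)) (Fin (n+1)) ℤ) :
    (Fin (n+2) → ℤ) →+ ℤ × ∀ j, ZMod (d j) :=
  AddMonoidHom.mk' (fun x => (ℓ * x 0 - ∑ i, r i * x i.succ,
      fun j => (((Pm *ᵥ (x ∘ Fin.succ)) j : ℤ) : ZMod (d j)))) (by
    intro x y
    refine Prod.ext ?_ ?_
    · simp only [Pi.add_apply, Prod.fst_add]
      rw [show (∑ i, r i * (x i.succ + y i.succ)) = (∑ i, r i * x i.succ) + ∑ i, r i * y i.succ by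
        rw [← Finset.sum_add_distrib]; congr 1; funext i; ring]
      ring
    · funext j
      have : (x + y) ∘ Fin.succ = x ∘ Fin.succ + y ∘ Fin.succ := rfl
      simp only [this, Matrix.mulVec_add, Pi.add_apply, Int.cast_add, Prod.snd_add])

lemma ThetaHom_apply (d : Fin (n+1) → ℕ) (ℓ : ℤ) (r : Fin (n+1) → ℤ)
    (Pm : Matrix (Fin (n+1)) (Fin (n+1)) ℤ) (x : Fin (n+2) → ℤ) :
    ThetaHom d ℓ r Pm x = (ℓ * x 0 - ∑ i, r i * x i.succ,
      fun j => (((Pm *ᵥ (x ∘ Fin.succ)) j : ℤ) : ZMod (d j))) := rfl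

def XiHom (d : Fin (n+1) → ℕ) (ln : ℕ) (chi : (∀ j, ZMod (d j)) →+ ZMod ln) :
    (ℤ × ∀ j, ZMod (d j)) →+ ZMod ln :=
  AddMonoidHom.mk' (fun su => (su.1 : ZMod ln) + chi su.2) (by
    intro x y
    simp only [Prod.fst_add, Prod.snd_add, Int.cast_add, map_add]
    ring)
open Matrix
section
variable {n : ℕ}

lemma range_eq_ker_Theta (p d : Fin (n+1) → ℕ) (hp : ∀ i, 0 < p i)
    (hdl : (d (Fin.last n) : ℤ) ≠ 0)
    (P Q : Matrix.GeneralLinearGroup (Fin (n+1)) ℤ)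
    (hSNF : (P : Matrix (Fin (n+1)) (Fin (n+1)) ℤ) *
        Matrix.diagonal (fun i => (p i : ℤ)) * Q = Matrix.diagonal (fun i => (d i : ℤ)))
    (r : Fin (n+1) → ℤ) (hpr : ∀ i, (p i : ℤ) * r i = (d (Fin.last n) : ℤ)) :
    LinearMap.range (Matrix.mulVecLin (relMatrix (n+1) p))
      = LinearMap.ker ((ThetaHom d (d (Fin.last n) : ℤ) r P.val).toIntLinearMap) := by
  have hPDp : P.val * Matrix.diagonal (fun i => (p i : ℤ))
      = Matrix.diagonal (fun i => (d i : ℤ)) * (↑Q⁻¹ : Matrix (Fin (n+1)) (Fin (n+1)) ℤ) := by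
    rw [← hSNF, Matrix.mul_assoc, Matrix.mul_assoc, Units.mul_inv, Matrix.mul_one]
  have hDpQ : Matrix.diagonal (fun i => (p i : ℤ)) * Q.val
      = (↑P⁻¹ : Matrix (Fin (n+1)) (Fin (n+1)) ℤ) * Matrix.diagonal (fun i => (d i : ℤ)) := by
    rw [← hSNF]; simp [← Matrix.mul_assoc]
  refine Submodule.ext fun x => ?_
  simp only [LinearMap.mem_range, LinearMap.mem_ker, AddMonoidHom.coe_toIntLinearMap]
  constructor
  · rintro ⟨c, rfl⟩
    rw [Matrix.mulVecLin_apply, relMatrix_mulVec]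
    have hsucc : (Fin.cons (∑ k, c k) (fun i => (p i : ℤ) * c i) : Fin (n+2) → ℤ) ∘ Fin.succ
        = Matrix.diagonal (fun i => (p i : ℤ)) *ᵥ c := by
      funext i
      simp [Matrix.mulVec_diagonal]
    rw [ThetaHom_apply, Prod.mk_eq_zero]
    constructor
    · simp only [Fin.cons_zero, Fin.cons_succ]
      rw [Finset.mul_sum]
      rw [sub_eq_zero]
      congr 1
      funext i
      rw [← hpr i]; ring
    · funext j
      rw [hsucc, Matrix.mulVec_mulVec, hPDp, ← Matrix.mulVec_mulVec]
      simp only [Matrix.mulVec_diagonal, Pi.zero_apply]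
      rw [ZMod.intCast_zmod_eq_zero_iff_dvd]
      exact Dvd.intro _ rfl
  · intro hx
    rw [ThetaHom_apply, Prod.mk_eq_zero] at hx
    obtain ⟨h1, h2'⟩ := hx
    have h2 : ∀ j, (((P.val *ᵥ (x ∘ Fin.succ)) j : ℤ) : ZMod (d j)) = 0 := fun j =>
      congrFun h2' j
    have hdvd : ∀ j, (d j : ℤ) ∣ (P.val *ᵥ (x ∘ Fin.succ)) j := fun j => by
      have := (ZMod.intCast_zmod_eq_zero_iff_dvd _ _).mp (h2 j)
      exact_mod_cast this
    set w : Fin (n+1) → ℤ := fun j => (P.val *ᵥ (x ∘ Fin.succ)) j / (d j : ℤ) with hwdef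
    have hw : Matrix.diagonal (fun i => (d i : ℤ)) *ᵥ w = P.val *ᵥ (x ∘ Fin.succ) := by
      funext j
      rw [Matrix.mulVec_diagonal]
      exact Int.mul_ediv_cancel' (hdvd j)
    set c : Fin (n+1) → ℤ := Q.val *ᵥ w with hcdef
    have hDpc : Matrix.diagonal (fun i => (p i : ℤ)) *ᵥ c = x ∘ Fin.succ := by
      rw [hcdef, Matrix.mulVec_mulVec, hDpQ, ← Matrix.mulVec_mulVec, hw,
        Matrix.mulVec_mulVec, Units.inv_mul, Matrix.one_mulVec]
    have hpc : ∀ i, (p i : ℤ) * c i = x i.succ := fun i => by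
      have := congrFun hDpc i
      simpa [Matrix.mulVec_diagonal] using this
    have hx0 : x 0 = ∑ k, c k := by
      apply mul_left_cancel₀ hdl
      rw [sub_eq_zero] at h1
      rw [h1, Finset.mul_sum]
      congr 1
      funext i
      rw [← hpc i, ← hpr i]; ring
    refine ⟨c, ?_⟩
    rw [Matrix.mulVecLin_apply, relMatrix_mulVec]
    funext i
    refine Fin.cases ?_ ?_ i
    · simp [hx0]
    · intro i
      simp [hpc i]
end
open Matrix
section
variable {n : ℕ}

lemma chi_mulVec (d : Fin (n+1) → ℕ) (ln : ℕ) (a : Fin (n+1) → ℤ)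
    (h : ∀ j, (ln : ℤ) ∣ (d j : ℤ) * a j) (r : Fin (n+1) → ℤ)
    (Pm : Matrix (Fin (n+1)) (Fin (n+1)) ℤ)
    (hcol : ∀ k, ∑ j, a j * Pm j k = r k) (y : Fin (n+1) → ℤ) :
    chiTot d ln a h (fun j => (((Pm *ᵥ y) j : ℤ) : ZMod (d j)))
      = ((∑ i, r i * y i : ℤ) : ZMod ln) := by
  rw [chiTot_apply]
  have step : ∀ j, chiHom (d j) ln (a j) (h j) (((Pm *ᵥ y) j : ℤ) : ZMod (d j))
      = ((a j * (Pm *ᵥ y) j : ℤ) : ZMod ln) := fun j => chiHom_intCast _ _ _ _ _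
  simp only [step]
  rw [← Int.cast_sum]
  congr 1
  have expand : ∀ j, a j * (Pm *ᵥ y) j = ∑ k, a j * Pm j k * y k := by
    intro j
    rw [Matrix.mulVec, dotProduct, Finset.mul_sum]
    congr 1; funext k; ring
  simp only [expand]
  rw [Finset.sum_comm]
  congr 1
  funext k
  rw [← Finset.sum_mul, hcol k]

lemma range_Theta_eq_ker_Xi (d : Fin (n+1) → ℕ) (hd : ∀ i, 0 < d i) (a : Fin (n+1) → ℤ)
    (h : ∀ j, ((d (Fin.last n) : ℤ)) ∣ (d j : ℤ) * a j) (r : Fin (n+1) → ℤ)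
    (P : Matrix.GeneralLinearGroup (Fin (n+1)) ℤ)
    (hcol : ∀ k, ∑ j, a j * P.val j k = r k) :
    LinearMap.range ((ThetaHom d ((d (Fin.last n)) : ℤ) r P.val).toIntLinearMap)
      = LinearMap.ker ((XiHom d (d (Fin.last n)) (chiTot d _ a h)).toIntLinearMap) := by
  refine Submodule.ext fun su => ?_
  obtain ⟨s, u⟩ := su
  simp only [LinearMap.mem_range, LinearMap.mem_ker, AddMonoidHom.coe_toIntLinearMap]
  constructor
  · rintro ⟨x, hx⟩
    rw [ThetaHom_apply, Prod.mk.injEq] at hx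
    obtain ⟨hx1, hx2⟩ := hx
    show (s : ZMod (d (Fin.last n))) + chiTot d _ a h u = 0
    rw [← hx1, ← hx2, chi_mulVec d _ a h r P.val hcol, ← Int.cast_add]
    have harith : ((d (Fin.last n) : ℤ) * x 0 - ∑ i, r i * x i.succ)
        + (∑ i, r i * (x ∘ Fin.succ) i) = (d (Fin.last n) : ℤ) * x 0 := by
      simp only [Function.comp_apply]
      ring
    rw [harith, Int.cast_mul]
    rw [show ((d (Fin.last n) : ℤ) : ZMod (d (Fin.last n))) = 0 from
      (ZMod.intCast_zmod_eq_zero_iff_dvd _ _).mpr dvd_rfl, zero_mul]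
  · intro hmem
    have hmem' : (s : ZMod (d (Fin.last n))) + chiTot d _ a h u = 0 := hmem
    have hdj : ∀ j : Fin (n+1), NeZero (d j) := fun j => ⟨(hd j).ne'⟩
    set ut : Fin (n+1) → ℤ := fun j => ((u j).val : ℤ) with hut
    have hval : ∀ j, ((ut j : ℤ) : ZMod (d j)) = u j := by
      intro j
      have := hdj j
      have h2 := ZMod.natCast_rightInverse (n := d j) (u j)
      show ((((u j).val : ℕ) : ℤ) : ZMod (d j)) = u j
      push_cast
      exact h2
    set y : Fin (n+1) → ℤ := (↑P⁻¹ : Matrix (Fin (n+1)) (Fin (n+1)) ℤ) *ᵥ ut with hy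
    have hPy : P.val *ᵥ y = ut := by
      rw [hy, Matrix.mulVec_mulVec, Units.mul_inv, Matrix.one_mulVec]
    have hchiu : chiTot d _ a h u = ((∑ i, r i * y i : ℤ) : ZMod (d (Fin.last n))) := by
      rw [show u = (fun j => (((P.val *ᵥ y) j : ℤ) : ZMod (d j))) from
        funext fun j => by rw [hPy]; exact (hval j).symm]
      exact chi_mulVec d _ a h r P.val hcol y
    have hdvd : ((d (Fin.last n) : ℕ) : ℤ) ∣ (s + ∑ i, r i * y i) := by
      rw [← ZMod.intCast_zmod_eq_zero_iff_dvd, Int.cast_add, ← hchiu]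
      exact hmem'
    obtain ⟨t, ht⟩ := hdvd
    refine ⟨Fin.cons t y, ?_⟩
    rw [ThetaHom_apply, Prod.mk.injEq]
    have hsucc : (Fin.cons t y : Fin (n+2) → ℤ) ∘ Fin.succ = y := funext fun i => Fin.cons_succ _ _ _
    constructor
    · simp only [Fin.cons_zero, Fin.cons_succ]
      linarith [ht]
    · rw [hsucc]
      funext j
      rw [hPy]
      exact hval j
end
open Matrix
section
variable {n : ℕ}

lemma ker_Xi_equiv (d : Fin (n+1) → ℕ) (hd : ∀ i, 0 < d i) (a : Fin (n+1) → ℤ)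
    (h : ∀ j, ((d (Fin.last n) : ℤ)) ∣ (d j : ℤ) * a j)
    (hunit : IsUnit ((a (Fin.last n) : ZMod (d (Fin.last n))))) :
    Nonempty ((↥(LinearMap.ker ((XiHom d (d (Fin.last n))
        (chiTot d _ a h)).toIntLinearMap))) ≃+
      (ℤ × ∀ j : Fin n, ZMod (d (Fin.castLE (Nat.le_succ n) j)))) := by
  classical
  set e := hunit.unit with he
  have heval : (e : ZMod (d (Fin.last n))) = ((a (Fin.last n) : ℤ) : ZMod (d (Fin.last n))) :=
    hunit.unit_spec
  -- the "last" coordinate completing w to an element of the kernel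
  set WL : ℤ → (∀ j' : Fin n, ZMod (d (Fin.castLE (Nat.le_succ n) j'))) → ZMod (d (Fin.last n)) :=
    fun s w => -(↑(e⁻¹) : ZMod (d (Fin.last n))) * ((s : ZMod (d (Fin.last n)))
      + ∑ j' : Fin n, chiHom (d (Fin.castSucc j')) (d (Fin.last n)) (a (Fin.castSucc j'))
          (h (Fin.castSucc j')) (w j')) with hWL
  set Wfull : ℤ → (∀ j' : Fin n, ZMod (d (Fin.castLE (Nat.le_succ n) j'))) → ∀ j, ZMod (d j) :=
    fun s w => Fin.snoc (α := fun j => ZMod (d j))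
      (fun j' => (show ZMod (d (Fin.castSucc j')) from w j')) (WL s w) with hWfull
  have hchiW : ∀ (s : ℤ) (w : ∀ j' : Fin n, ZMod (d (Fin.castLE (Nat.le_succ n) j'))),
      chiTot d (d (Fin.last n)) a h (Wfull s w)
        = (∑ j' : Fin n, chiHom (d (Fin.castSucc j')) (d (Fin.last n)) (a (Fin.castSucc j'))
            (h (Fin.castSucc j')) (w j'))
          + ((a (Fin.last n) : ℤ) : ZMod (d (Fin.last n))) * WL s w := by
    intro s w
    rw [chiTot_apply, Fin.sum_univ_castSucc]
    congr 1
    · apply Finset.sum_congr rfl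
      intro j' _
      congr 1
      exact Fin.snoc_castSucc _ _ j'
    · rw [show (Wfull s w) (Fin.last n) = WL s w from Fin.snoc_last _ _]
      exact chiHom_self_apply _ _ _ _
  have hmemW : ∀ (s : ℤ) (w : ∀ j' : Fin n, ZMod (d (Fin.castLE (Nat.le_succ n) j'))),
      (XiHom d (d (Fin.last n)) (chiTot d _ a h)) (s, Wfull s w) = 0 := by
    intro s w
    show (s : ZMod (d (Fin.last n))) + chiTot d (d (Fin.last n)) a h (Wfull s w) = 0
    rw [hchiW]
    set X := (s : ZMod (d (Fin.last n)))
      + ∑ j' : Fin n, chiHom (d (Fin.castSucc j')) (d (Fin.last n)) (a (Fin.castSucc j'))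
          (h (Fin.castSucc j')) (w j') with hX
    have key : ((a (Fin.last n) : ℤ) : ZMod (d (Fin.last n))) * (-(↑(e⁻¹)) * X) = -X := by
      rw [← heval, ← mul_assoc, mul_neg, mul_comm (e : ZMod (d (Fin.last n))), Units.inv_mul,
        neg_one_mul]
    have hWLX : WL s w = -(↑(e⁻¹) : ZMod (d (Fin.last n))) * X := rfl
    rw [hWLX, key, hX]
    ring
  -- the forward map
  set F : (↥(LinearMap.ker ((XiHom d (d (Fin.last n)) (chiTot d _ a h)).toIntLinearMap))) →
      (ℤ × ∀ j : Fin n, ZMod (d (Fin.castLE (Nat.le_succ n) j))) :=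
    fun z => (z.val.1, fun j' => z.val.2 (Fin.castLE (Nat.le_succ n) j')) with hF
  set G : (ℤ × ∀ j : Fin n, ZMod (d (Fin.castLE (Nat.le_succ n) j))) →
      (↥(LinearMap.ker ((XiHom d (d (Fin.last n)) (chiTot d _ a h)).toIntLinearMap))) :=
    fun sw => ⟨(sw.1, Wfull sw.1 sw.2), LinearMap.mem_ker.mpr (hmemW sw.1 sw.2)⟩ with hG
  refine ⟨AddEquiv.mk' ⟨F, G, ?_, ?_⟩ ?_⟩
  · -- left inverse : G ∘ F = id
    intro z
    obtain ⟨⟨s, u⟩, hz⟩ := z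
    have hz' : (s : ZMod (d (Fin.last n))) + chiTot d (d (Fin.last n)) a h u = 0 :=
      LinearMap.mem_ker.mp hz
    refine Subtype.ext (Prod.ext rfl ?_)
    show Wfull s (fun j' => u (Fin.castLE (Nat.le_succ n) j')) = u
    have hcast : ∀ j' : Fin n, Fin.castLE (Nat.le_succ n) j' = Fin.castSucc j' := fun _ => rfl
    funext j
    refine Fin.lastCases ?_ ?_ j
    · rw [show Wfull s (fun j' => u (Fin.castLE (Nat.le_succ n) j')) (Fin.last n)
        = WL s (fun j' => u (Fin.castLE (Nat.le_succ n) j')) from Fin.snoc_last _ _]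
      show -(↑(e⁻¹) : ZMod (d (Fin.last n))) * ((s : ZMod (d (Fin.last n)))
          + ∑ j' : Fin n, chiHom (d (Fin.castSucc j')) (d (Fin.last n)) (a (Fin.castSucc j'))
              (h (Fin.castSucc j')) (u (Fin.castLE (Nat.le_succ n) j'))) = u (Fin.last n)
      have hz2 : (s : ZMod (d (Fin.last n)))
          + ((∑ j' : Fin n, chiHom (d (Fin.castSucc j')) (d (Fin.last n)) (a (Fin.castSucc j'))
              (h (Fin.castSucc j')) (u (Fin.castLE (Nat.le_succ n) j')))
            + ((a (Fin.last n) : ℤ) : ZMod (d (Fin.last n))) * u (Fin.last n)) = 0 := by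
        rw [chiTot_apply, Fin.sum_univ_castSucc, chiHom_self_apply] at hz'
        exact hz'
      have hXu : ((s : ZMod (d (Fin.last n)))
          + ∑ j' : Fin n, chiHom (d (Fin.castSucc j')) (d (Fin.last n)) (a (Fin.castSucc j'))
              (h (Fin.castSucc j')) (u (Fin.castLE (Nat.le_succ n) j')))
          = -(((a (Fin.last n) : ℤ) : ZMod (d (Fin.last n))) * u (Fin.last n)) := by
        linear_combination hz2
      rw [hXu, ← heval, neg_mul_neg, ← mul_assoc, Units.inv_mul, one_mul]
    · intro j'
      exact Fin.snoc_castSucc _ _ j'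
  · -- right inverse : F ∘ G = id
    intro sw
    obtain ⟨s, w⟩ := sw
    refine Prod.ext rfl ?_
    funext j'
    show Wfull s w (Fin.castLE (Nat.le_succ n) j') = w j'
    exact Fin.snoc_castSucc _ _ j'
  · -- additivity
    intro z z'
    refine Prod.ext ?_ ?_
    · show (z.val + z'.val).1 = z.val.1 + z'.val.1
      rfl
    · funext j'
      show (z.val + z'.val).2 (Fin.castLE (Nat.le_succ n) j') = _
      rfl
end
open Matrix
section
variable {n : ℕ}

lemma core (p d : Fin (n+1) → ℕ)
    (hp : ∀ i, 0 < p i) (hd : ∀ i, 0 < d i)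
    (hchain : ∀ i j : Fin (n+1), i ≤ j → d i ∣ d j)
    (P Q : Matrix.GeneralLinearGroup (Fin (n+1)) ℤ)
    (hSNF : (P : Matrix (Fin (n+1)) (Fin (n+1)) ℤ) *
        Matrix.diagonal (fun i => (p i : ℤ)) * Q = Matrix.diagonal (fun i => (d i : ℤ)))
    (hcop : IsCoprime (∑ i, Q.val i (Fin.last n)) ((d (Fin.last n) : ℤ))) :
    Nonempty
      (((Fin (n + 2) → ℤ) ⧸ LinearMap.range (Matrix.mulVecLin (relMatrix (n+1) p))) ≃+
        (ℤ × ∀ j : Fin n, ZMod (d (Fin.castLE (Nat.le_succ n) j)))) := by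
  have hdlne : (d (Fin.last n) : ℤ) ≠ 0 := by exact_mod_cast (hd (Fin.last n)).ne'
  have hdl : ∀ j, (d j : ℤ) ∣ (d (Fin.last n) : ℤ) := fun j =>
    Int.natCast_dvd_natCast.mpr (hchain j (Fin.last n) (Fin.le_last j))
  have hDR' : Matrix.diagonal (fun i => (p i : ℤ)) *
      (Q.val * Matrix.diagonal (fun j => (d (Fin.last n) : ℤ) / (d j : ℤ)) * P.val)
      = (d (Fin.last n) : ℤ) • 1 := diag_p_mul_Rmat p d hchain P Q hSNF
  set r : Fin (n+1) → ℤ := fun i =>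
    (Q.val * Matrix.diagonal (fun j => (d (Fin.last n) : ℤ) / (d j : ℤ)) * P.val) i i with hr
  have hpr : ∀ i, (p i : ℤ) * r i = (d (Fin.last n) : ℤ) := fun i =>
    Rmat_diag p _ _ hDR' i
  set a : Fin (n+1) → ℤ := fun j => ((d (Fin.last n) : ℤ) / (d j : ℤ)) * ∑ i, Q.val i j with ha
  have hcol : ∀ k, ∑ j, a j * P.val j k = r k := fun k => colsum_eq p hp d P Q hDR' k
  have hda : ∀ j, ((d (Fin.last n) : ℤ)) ∣ (d j : ℤ) * a j := by
    intro j
    refine ⟨∑ i, Q.val i j, ?_⟩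
    show (d j : ℤ) * (((d (Fin.last n) : ℤ) / (d j : ℤ)) * ∑ i, Q.val i j) = _
    rw [← mul_assoc, Int.mul_ediv_cancel' (hdl j)]
  have K1 := range_eq_ker_Theta p d hp hdlne P Q hSNF r hpr
  have K2 := range_Theta_eq_ker_Xi d hd a hda r P hcol
  have hunit : IsUnit ((a (Fin.last n) : ℤ) : ZMod (d (Fin.last n))) := by
    have halast : a (Fin.last n) = ∑ i, Q.val i (Fin.last n) := by
      show ((d (Fin.last n) : ℤ) / (d (Fin.last n) : ℤ)) * _ = _
      rw [Int.ediv_self hdlne, one_mul]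
    have hmapped := hcop.map (Int.castRingHom (ZMod (d (Fin.last n))))
    rw [show ((Int.castRingHom (ZMod (d (Fin.last n)))) ((d (Fin.last n) : ℤ)))
      = 0 from (ZMod.intCast_zmod_eq_zero_iff_dvd _ _).mpr dvd_rfl] at hmapped
    rw [isCoprime_zero_right] at hmapped
    rw [halast]
    exact hmapped
  obtain ⟨E⟩ := ker_Xi_equiv d hd a hda hunit
  have lequiv : ((Fin (n + 2) → ℤ) ⧸ LinearMap.range (Matrix.mulVecLin (relMatrix (n+1) p)))
      ≃ₗ[ℤ] ↥(LinearMap.ker ((XiHom d (d (Fin.last n))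
          (chiTot d _ a hda)).toIntLinearMap)) :=
    (Submodule.quotEquivOfEq _ _ K1).trans
      (((ThetaHom d ((d (Fin.last n)) : ℤ) r P.val).toIntLinearMap).quotKerEquivRange.trans
        (LinearEquiv.ofEq _ _ K2))
  exact ⟨lequiv.toAddEquiv.trans E⟩
end

open Matrix
section
variable {n : ℕ}

lemma unit_of_sq_zero (M : Matrix (Fin (n+1)) (Fin (n+1)) ℤ) (h2 : M * M = 0) :
    (1 + M) * (1 - M) = 1 ∧ (1 - M) * (1 + M) = 1 := by
  constructor
  · rw [add_mul, one_mul, mul_sub, mul_one, h2, sub_zero]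
    abel
  · rw [sub_mul, one_mul, mul_add, mul_one, h2, add_zero]
    abel
end

/-- If `d₁ ∣ ⋯ ∣ d_m` are the invariant factors of `diag (p₁, …, p_m)` (i.e.
the diagonal of its Smith normal form), then the cokernel of the map
`ℤ^m → ℤ^{m+1}`, `eᵢ ↦ e₀ + pᵢ eᵢ`, is isomorphic to
`ℤ ⊕ ⊕_{j=1}^{m-1} ℤ/dⱼ`. -/
theorem stmt_14 (m : ℕ) (p d : Fin m → ℕ)
    (hp : ∀ i, 0 < p i) (hd : ∀ i, 0 < d i)
    (hchain : ∀ i j : Fin m, i ≤ j → d i ∣ d j)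
    (P Q : Matrix.GeneralLinearGroup (Fin m) ℤ)
    (hSNF : (P : Matrix (Fin m) (Fin m) ℤ) *
        Matrix.diagonal (fun i => (p i : ℤ)) * Q
      = Matrix.diagonal (fun i => (d i : ℤ))) :
    Nonempty
      (((Fin (m + 1) → ℤ) ⧸ LinearMap.range (Matrix.mulVecLin (relMatrix m p))) ≃+
        (ℤ × ∀ j : Fin (m - 1), ZMod (d (Fin.castLE (Nat.sub_le m 1) j)))) := by
  cases m with
  | zero =>
    have hbot : LinearMap.range (Matrix.mulVecLin (relMatrix 0 p)) = ⊥ := by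
      rw [LinearMap.range_eq_bot]
      apply LinearMap.ext
      intro c
      rw [Subsingleton.elim c 0, map_zero]
      rfl
    refine ⟨AddEquiv.trans (LinearEquiv.toAddEquiv
      ((Submodule.quotEquivOfEq _ _ hbot).trans (Submodule.quotEquivOfEqBot ⊥ rfl))) ?_⟩
    exact { toFun := fun x => (x 0, fun j => j.elim0),
            invFun := fun y _ => y.1,
            left_inv := fun x => funext fun i => by
              have hi : i = 0 := Fin.fin_one_eq_zero i
              rw [hi],
            right_inv := fun y => Prod.ext rfl (funext fun j => j.elim0),
            map_add' := fun x y => Prod.ext rfl (funext fun j => j.elim0) }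
  | succ n =>
  have hdlne : (d (Fin.last n) : ℤ) ≠ 0 := by exact_mod_cast (hd (Fin.last n)).ne'
  have hdl : ∀ j, (d j : ℤ) ∣ (d (Fin.last n) : ℤ) := fun j =>
    Int.natCast_dvd_natCast.mpr (hchain j (Fin.last n) (Fin.le_last j))
  have hDR' : Matrix.diagonal (fun i => (p i : ℤ)) *
      (Q.val * Matrix.diagonal (fun j => (d (Fin.last n) : ℤ) / (d j : ℤ)) * P.val)
      = (d (Fin.last n) : ℤ) • 1 := diag_p_mul_Rmat p d hchain P Q hSNF
  have hbz := bezout_sum p hp d hdlne P Q hDR'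
  set x0 : Fin (n+1) → ℤ := fun i => (↑Q⁻¹ : Matrix (Fin (n+1)) (Fin (n+1)) ℤ) (Fin.last n) i *
    (↑P⁻¹ : Matrix (Fin (n+1)) (Fin (n+1)) ℤ) i (Fin.last n) with hx0
  set g : Fin (n+1) → ℤ := fun j => ∑ k, P.val j k * x0 k with hg
  set a : Fin (n+1) → ℤ := fun j => ((d (Fin.last n) : ℤ) / (d j : ℤ)) * ∑ i, Q.val i j with ha
  have hcol : ∀ k, ∑ j, a j * P.val j k
      = (Q.val * Matrix.diagonal (fun j => (d (Fin.last n) : ℤ) / (d j : ℤ)) * P.val) k k :=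
    fun k => colsum_eq p hp d P Q hDR' k
  have hga : ∑ j, a j * g j = 1 := by
    have e1 : ∀ j, a j * g j = ∑ k, (a j * P.val j k) * x0 k := by
      intro j
      rw [hg, Finset.mul_sum]
      congr 1; funext k; ring
    simp only [e1]
    rw [Finset.sum_comm]
    have e2 : ∀ k, ∑ j, (a j * P.val j k) * x0 k
        = (Q.val * Matrix.diagonal (fun j => (d (Fin.last n) : ℤ) / (d j : ℤ)) * P.val) k k
          * x0 k := by
      intro k
      rw [← Finset.sum_mul, hcol k]
    simp only [e2]
    rw [← hbz]
    congr 1; funext k; ring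
  have hsplit : a (Fin.last n) * g (Fin.last n)
      + (∑ j' : Fin n, a (Fin.castSucc j') * g (Fin.castSucc j')) = 1 := by
    rw [← hga, Fin.sum_univ_castSucc (f := fun j => a j * g j)]
    ring
  obtain ⟨k0, hk⟩ := exists_coprime_shift (a (Fin.last n))
    (∑ j' : Fin n, a (Fin.castSucc j') * g (Fin.castSucc j')) (g (Fin.last n))
    ((d (Fin.last n)) : ℤ) hdlne hsplit
  set cM : Fin (n+1) → ℤ := fun i => if i = Fin.last n then 0 else -(k0 * g i) with hcM
  set cN : Fin (n+1) → ℤ := fun i => cM i * ((d (Fin.last n) : ℤ) / (d i : ℤ)) with hcN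
  set Mm : Matrix (Fin (n+1)) (Fin (n+1)) ℤ :=
    Matrix.of (fun i j => if j = Fin.last n then cM i else 0) with hMm
  set Nm : Matrix (Fin (n+1)) (Fin (n+1)) ℤ :=
    Matrix.of (fun i j => if j = Fin.last n then cN i else 0) with hNm
  have hcMlast : cM (Fin.last n) = 0 := if_pos rfl
  have hcNlast : cN (Fin.last n) = 0 := by rw [hcN]; simp [hcMlast]
  have hM2 : Mm * Mm = 0 := by
    ext i j
    rw [Matrix.mul_apply]
    rw [Finset.sum_eq_single (Fin.last n)]
    · show Mm i (Fin.last n) * Mm (Fin.last n) j = 0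
      have : Mm (Fin.last n) j = 0 := by
        show (if j = Fin.last n then cM (Fin.last n) else 0) = 0
        split <;> simp [hcMlast]
      rw [this, mul_zero]
    · intro b _ hb
      have : Mm i b = 0 := if_neg hb
      rw [this, zero_mul]
    · simp
  have hN2 : Nm * Nm = 0 := by
    ext i j
    rw [Matrix.mul_apply]
    rw [Finset.sum_eq_single (Fin.last n)]
    · show Nm i (Fin.last n) * Nm (Fin.last n) j = 0
      have : Nm (Fin.last n) j = 0 := by
        show (if j = Fin.last n then cN (Fin.last n) else 0) = 0
        split <;> simp [hcNlast]
      rw [this, mul_zero]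
    · intro b _ hb
      have : Nm i b = 0 := if_neg hb
      rw [this, zero_mul]
    · simp
  set Tu : Matrix.GeneralLinearGroup (Fin (n+1)) ℤ :=
    ⟨1 + Mm, 1 - Mm, (unit_of_sq_zero Mm hM2).1, (unit_of_sq_zero Mm hM2).2⟩ with hTu
  set Nu : Matrix.GeneralLinearGroup (Fin (n+1)) ℤ :=
    ⟨1 + Nm, 1 - Nm, (unit_of_sq_zero Nm hN2).1, (unit_of_sq_zero Nm hN2).2⟩ with hNu
  have hMD : Mm * Matrix.diagonal (fun i => (d i : ℤ))
      = Matrix.diagonal (fun i => (d i : ℤ)) * Nm := by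
    ext i j
    rw [Matrix.mul_diagonal, Matrix.diagonal_mul]
    show (if j = Fin.last n then cM i else 0) * (d j : ℤ)
      = (d i : ℤ) * (if j = Fin.last n then cN i else 0)
    split
    · next hj =>
      subst hj
      rw [hcN, ← mul_assoc, mul_comm ((d i : ℤ)) (cM i), mul_assoc,
        Int.mul_ediv_cancel' (hdl i)]
    · ring
  have hSNF1 : ((Tu * P).val) * Matrix.diagonal (fun i => (p i : ℤ)) * ((Q * Nu⁻¹).val)
      = Matrix.diagonal (fun i => (d i : ℤ)) := by
    have hq1 : (Q * Nu⁻¹).val = Q.val * (1 - Nm) := rfl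
    have ht1 : (Tu * P).val = (1 + Mm) * P.val := rfl
    rw [hq1, ht1]
    calc (1 + Mm) * P.val * Matrix.diagonal (fun i => (p i : ℤ)) * (Q.val * (1 - Nm))
        = (1 + Mm) * (P.val * Matrix.diagonal (fun i => (p i : ℤ)) * Q.val) * (1 - Nm) := by
          simp only [Matrix.mul_assoc]
      _ = (1 + Mm) * Matrix.diagonal (fun i => (d i : ℤ)) * (1 - Nm) := by rw [hSNF]
      _ = Matrix.diagonal (fun i => (d i : ℤ)) := by
          rw [add_mul, one_mul, hMD, add_mul, mul_sub, mul_sub, mul_one, mul_one,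
            Matrix.mul_assoc, hN2, Matrix.mul_zero, sub_zero]
          abel
  have hQ1last : (∑ i, (Q * Nu⁻¹).val i (Fin.last n))
      = a (Fin.last n) + k0 * (∑ j' : Fin n, a (Fin.castSucc j') * g (Fin.castSucc j')) := by
    have hq1 : (Q * Nu⁻¹).val = Q.val * (1 - Nm) := rfl
    have hentry : ∀ i, (Q.val * (1 - Nm)) i (Fin.last n)
        = ∑ k, Q.val i k * ((if k = Fin.last n then (1:ℤ) else 0) - cN k) := by
      intro i
      rw [Matrix.mul_apply]
      congr 1; funext k
      congr 1
      show (1 - Nm) k (Fin.last n) = _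
      rw [Matrix.sub_apply, Matrix.one_apply]
      congr 1
      exact if_pos rfl
    rw [hq1]
    simp only [hentry]
    rw [Finset.sum_comm]
    have hfac : ∀ k, (∑ i, Q.val i k * ((if k = Fin.last n then (1:ℤ) else 0) - cN k))
        = (∑ i, Q.val i k) * ((if k = Fin.last n then (1:ℤ) else 0) - cN k) :=
      fun k => (Finset.sum_mul _ _ _).symm
    simp only [hfac]
    have hterm : ∀ k, (∑ i, Q.val i k) * ((if k = Fin.last n then (1:ℤ) else 0) - cN k)
        = (if k = Fin.last n then (∑ i, Q.val i k) else 0) - cM k * a k := by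
      intro k
      simp only [hcN, ha]
      split <;> ring
    simp only [hterm]
    rw [Finset.sum_sub_distrib]
    rw [Finset.sum_ite_eq' Finset.univ (Fin.last n) (fun k => ∑ i, Q.val i k)]
    simp only [Finset.mem_univ, if_true]
    rw [Fin.sum_univ_castSucc (f := fun k => cM k * a k)]
    have hcMcs : ∀ j' : Fin n, cM (Fin.castSucc j') = -(k0 * g (Fin.castSucc j')) := by
      intro j'
      exact if_neg (Fin.castSucc_lt_last j').ne
    simp only [hcMcs, hcMlast, zero_mul, add_zero]
    have halast : a (Fin.last n) = ∑ i, Q.val i (Fin.last n) := by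
      simp only [ha]
      rw [Int.ediv_self hdlne, one_mul]
    rw [← halast]
    have hBsum : ∑ j' : Fin n, -(k0 * g (Fin.castSucc j')) * a (Fin.castSucc j')
        = -(k0 * ∑ j' : Fin n, a (Fin.castSucc j') * g (Fin.castSucc j')) := by
      rw [Finset.mul_sum, ← Finset.sum_neg_distrib]
      congr 1; funext j'
      ring
    rw [hBsum]
    ring
  have := core p d hp hd hchain (Tu * P) (Q * Nu⁻¹) hSNF1 (by rw [hQ1last]; exact hk)
  exact this
end
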